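/- Let 0 < β < α < 2, d ≥ 1, and let p₀(t,x,y) be the symmetric α-stable heat kernel. Suppose b : ℝ^d × ℝ^d → ℝ is bounded measurable with b(x,z) = b(x,−z), and define S^b_z p₀(s,z,y) as the principal value integral A(d,−β) p.v. ∫ (p₀(s,z+w,y) − p₀(s,z,y)) b(z,w)/|w|^{d+β} dw. Assume the bound |S^b_z p₀(s,z,y)| ≤ C₇ ‖b‖_∞ f₀(s,z,y) where f₀(s,z,y) := (max(s^{1/α},|z−y|))^{−(d+β)}. Define q₀^b := p₀ and inductively qₙ^b(t,x,y) := ∫₀^t ∫_{ℝ^d} q_{n−1}^b(t−s,x,z) S^b_z p₀(s,z,y) dz ds. Then there are constants C, K > 0 depending only on d, α, β, ‖b‖_∞ such that |qₙ^b(t,x,y)| ≤ C K^n g(t,x,y) for all n ≥ 0, t ∈ (0,1] and x,y ∈ ℝ^d, where g(t,x,y) := t^{−d/α} if |x−y| ≤ t^{1/α} and g(t,x,y) := t/|x−y|^{d+α} + t/|x−y|^{d+β} otherwise. -/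

import Mathlib

open Real MeasureTheory

/-- `f₀(s,z,y) = (max(s^{1/α}, |z-y|))^{-(d+β)}`. -/
noncomputable def paperF₀ (d : ℕ) (α β : ℝ) (s : ℝ)
    (z y : EuclideanSpace ℝ (Fin d)) : ℝ :=
  (max (s ^ (1/α)) (dist z y)) ^ (-((d : ℝ) + β))

/-- `g(t,x,y) = t^{-d/α}` if `|x-y| ≤ t^{1/α}`, else
`t/|x-y|^{d+α} + t/|x-y|^{d+β}`. -/
noncomputable def paperG (d : ℕ) (α β : ℝ) (t : ℝ)
    (x y : EuclideanSpace ℝ (Fin d)) : ℝ :=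
  if dist x y ≤ t ^ (1/α) then t ^ (-(d : ℝ)/α)
  else t / (dist x y) ^ ((d : ℝ) + α) + t / (dist x y) ^ ((d : ℝ) + β)

/-!
Induction on `n`. Bounding `|q_{n+1}|` under the double integral by `|qₙ| ≤ C Kⁿ g` and
`|S^b p₀| ≤ C₇ ‖b‖ f₀` reduces the step to the space-time convolution estimate
`∫₀ᵗ ∫ g(t-s,x,z) f₀(s,z,y) dz ds ≤ C' g(t,x,y)`, so `K = C₇ ‖b‖ C' + 1` works. The analytic
work is to make the Bochner integrals meaningful: `g f₀` is integrable in `z` because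
`g(τ,·,·) ≤ 2τ^{-d/α}` and `f₀(s,·,y)` has mass `s^{-β/α}` times a constant, and the `z`-integral
is integrable in `s` on `(0,t]` since near `s = t` one uses instead
`g(τ,x,z) ≤ 2τ^{β/α} f₀(τ,z,x)` together with `f₀(s,·,·) ≤ s^{-(d+β)/α}`.
-/

open Set

section Radial

variable {E : Type*} [NormedAddCommGroup E] [NormedSpace ℝ E] {p : ℝ}

lemma max_dist_rpow_neg_eq {c : ℝ} (hc : 0 < c) (y z : E) :
    max c (dist z y) ^ (-p) = c ^ (-p) * max 1 ‖c⁻¹ • (z - y)‖ ^ (-p) := by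
  rw [norm_smul, norm_inv, norm_of_nonneg hc.le, ← dist_eq_norm,
    ← mul_rpow hc.le (le_max_of_le_left zero_le_one), mul_max_of_nonneg _ _ hc.le, mul_one,
    mul_inv_cancel_left₀ hc.ne']

variable [FiniteDimensional ℝ E] [MeasurableSpace E] [BorelSpace E] {μ : Measure E}
  [μ.IsAddHaarMeasure]

lemma integrable_max_one_norm_rpow_neg (hp : (Module.finrank ℝ E : ℝ) < p) :
    Integrable (fun w : E => (max 1 ‖w‖) ^ (-p)) μ := by
  have hp0 : 0 ≤ p := (Nat.cast_nonneg _).trans hp.le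
  refine ((integrable_one_add_norm hp).const_mul ((2:ℝ) ^ p)).mono'
    (Measurable.aestronglyMeasurable (by fun_prop)) (ae_of_all _ fun w => ?_)
  have hmid : 0 < (1 + ‖w‖) / 2 := by positivity
  have hmax : (1 + ‖w‖) / 2 ≤ max 1 ‖w‖ := by
    rcases le_total ‖w‖ 1 with h | h
    · exact le_max_of_le_left (by linarith)
    · exact le_max_of_le_right (by linarith)
  rw [norm_of_nonneg (by positivity)]
  calc max 1 ‖w‖ ^ (-p) ≤ ((1 + ‖w‖) / 2) ^ (-p) :=
        rpow_le_rpow_of_nonpos hmid hmax (neg_nonpos.2 hp0)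
    _ = 2 ^ p * (1 + ‖w‖) ^ (-p) := by
        rw [div_rpow (by positivity) zero_le_two, rpow_neg zero_le_two, div_eq_mul_inv, inv_inv,
          mul_comm]

lemma integrable_max_dist_rpow_neg (hp : (Module.finrank ℝ E : ℝ) < p) {c : ℝ} (hc : 0 < c)
    (y : E) : Integrable (fun z : E => max c (dist z y) ^ (-p)) μ := by
  simp_rw [max_dist_rpow_neg_eq hc y]
  exact (((integrable_max_one_norm_rpow_neg hp).comp_smul (inv_ne_zero hc.ne')).comp_sub_right
    y).const_mul _

lemma integral_max_dist_rpow_neg {c : ℝ} (hc : 0 < c) (y : E) :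
    ∫ z : E, max c (dist z y) ^ (-p) ∂μ =
      c ^ ((Module.finrank ℝ E : ℝ) - p) * ∫ w : E, max 1 ‖w‖ ^ (-p) ∂μ := by
  simp_rw [max_dist_rpow_neg_eq hc y]
  rw [integral_const_mul, integral_sub_right_eq_self (fun u : E => max 1 ‖c⁻¹ • u‖ ^ (-p)) y,
    Measure.integral_comp_inv_smul_of_nonneg μ (fun w : E => max 1 ‖w‖ ^ (-p)) hc.le,
    smul_eq_mul, ← mul_assoc, ← rpow_natCast, ← rpow_add hc, neg_add_eq_sub]

end Radial

lemma div_rpow_le_rpow_div_mul_rpow_neg {α β γ τ r δ : ℝ} (hα : 0 < α) (hβγ : β ≤ γ) (hγα : γ ≤ α)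
    (hτ : 0 < τ) (hτ1 : τ ≤ 1) (hr : τ ^ (1/α) ≤ r) :
    τ / r ^ (δ + γ) ≤ τ ^ (β/α) * r ^ (-(δ + β)) := by
  have hτα : 0 < τ ^ (1/α) := rpow_pos_of_pos hτ _
  have hr0 : 0 < r := hτα.trans_le hr
  have hfar : r ^ (β - γ) ≤ τ ^ ((β - γ) / α) := by
    rw [div_eq_mul_one_div (β - γ), mul_comm, rpow_mul hτ.le]
    exact rpow_le_rpow_of_nonpos hτα hr (by linarith)
  have hexp : β/α ≤ 1 + (β - γ)/α := by
    have : 1 + (β - γ)/α - β/α = (α - γ)/α := by field_simp; ring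
    linarith [div_nonneg (sub_nonneg.2 hγα) hα.le]
  calc τ / r ^ (δ + γ) = τ * r ^ (β - γ) * r ^ (-(δ + β)) := by
        rw [div_eq_mul_inv, ← rpow_neg hr0.le, mul_assoc, ← rpow_add hr0]
        ring_nf
    _ ≤ τ ^ (1 + (β - γ)/α) * r ^ (-(δ + β)) := by
        rw [rpow_add hτ, rpow_one]
        gcongr
    _ ≤ τ ^ (β/α) * r ^ (-(δ + β)) :=
        mul_le_mul_of_nonneg_right (rpow_le_rpow_of_exponent_ge hτ hτ1 hexp) (by positivity)

section SpaceTimeConvolution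

variable {Z : Type*} [MeasureSpace Z]

noncomputable def spaceTimeConv (u v : ℝ → Z → Z → ℝ) (t : ℝ) (x y : Z) : ℝ :=
  ∫ s in Ioc 0 t, ∫ z, u (t - s) x z * v s z y

lemma abs_spaceTimeConv_le {u v g f : ℝ → Z → Z → ℝ} {M t : ℝ} {x y : Z}
    (hint : ∀ s ∈ Ioo 0 t, Integrable fun z => g (t - s) x z * f s z y)
    (hint' : IntegrableOn (fun s => ∫ z, g (t - s) x z * f s z y) (Ioc 0 t))
    (hle : ∀ s ∈ Ioo 0 t, ∀ z, |u (t - s) x z * v s z y| ≤ M * (g (t - s) x z * f s z y)) :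
    |spaceTimeConv u v t x y| ≤ M * spaceTimeConv g f t x y := by
  have hIoo : ∀ᵐ s ∂volume.restrict (Ioc 0 t), s ∈ Ioo 0 t :=
    (ae_restrict_congr_set Ioo_ae_eq_Ioc).1 (ae_restrict_mem measurableSet_Ioo)
  rw [spaceTimeConv, spaceTimeConv, ← integral_const_mul, ← Real.norm_eq_abs]
  refine norm_integral_le_of_norm_le (hint'.const_mul M) ?_
  filter_upwards [hIoo] with s hs
  rw [← integral_const_mul]
  exact norm_integral_le_of_norm_le ((hint s hs).const_mul M) (ae_of_all _ fun z => hle s hs z)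

end SpaceTimeConvolution

section Kernels

variable {d : ℕ} {α β : ℝ}

local notation "E" => EuclideanSpace ℝ (Fin d)

lemma paperF₀_nonneg (s : ℝ) (z y : E) : 0 ≤ paperF₀ d α β s z y :=
  rpow_nonneg (le_max_of_le_right dist_nonneg) _

lemma paperG_nonneg {t : ℝ} (ht : 0 ≤ t) (x y : E) : 0 ≤ paperG d α β t x y := by
  unfold paperG
  split_ifs <;> positivity

lemma paperF₀_le (hβ : 0 ≤ β) {s : ℝ} (hs : 0 < s) (z y : E) :
    paperF₀ d α β s z y ≤ (s ^ (1/α)) ^ (-((d:ℝ) + β)) :=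
  rpow_le_rpow_of_nonpos (rpow_pos_of_pos hs _) (le_max_left _ _)
    (by linarith [d.cast_nonneg (α := ℝ)])

lemma measurable_paperF₀ : Measurable fun p : ℝ × E × E => paperF₀ d α β p.1 p.2.1 p.2.2 := by
  unfold paperF₀; fun_prop

lemma measurable_paperG : Measurable fun p : ℝ × E × E => paperG d α β p.1 p.2.1 p.2.2 := by
  unfold paperG
  exact Measurable.ite (measurableSet_le (by fun_prop) (by fun_prop)) (by fun_prop) (by fun_prop)

lemma integrable_paperF₀ (hβ : 0 < β) {s : ℝ} (hs : 0 < s) (y : E) :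
    Integrable fun z : E => paperF₀ d α β s z y :=
  integrable_max_dist_rpow_neg (by simpa using hβ) (rpow_pos_of_pos hs _) y

lemma integral_paperF₀ {s : ℝ} (hs : 0 < s) (y : E) :
    ∫ z : E, paperF₀ d α β s z y = s ^ (-(β/α)) * ∫ w : E, max 1 ‖w‖ ^ (-((d:ℝ) + β)) := by
  unfold paperF₀
  rw [integral_max_dist_rpow_neg (rpow_pos_of_pos hs _), finrank_euclideanSpace_fin,
    ← rpow_mul hs.le]
  ring_nf

lemma rpow_div_mul_rpow_one_div_rpow_neg {τ : ℝ} (hτ : 0 < τ) :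
    τ ^ (β/α) * (τ ^ (1/α)) ^ (-((d:ℝ) + β)) = τ ^ (-(d:ℝ)/α) := by
  rw [← rpow_mul hτ.le, ← rpow_add hτ]
  ring_nf

lemma paperG_le_mul_paperF₀ (hα : 0 < α) (hβα : β ≤ α) {τ : ℝ} (hτ : 0 < τ) (hτ1 : τ ≤ 1)
    (x z : E) : paperG d α β τ x z ≤ 2 * τ ^ (β/α) * paperF₀ d α β τ z x := by
  unfold paperG paperF₀
  rw [dist_comm z x]
  split_ifs with h
  · rw [max_eq_left h, mul_assoc, rpow_div_mul_rpow_one_div_rpow_neg hτ]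
    linarith [rpow_nonneg hτ.le (-(d:ℝ)/α)]
  · replace h := (not_le.1 h).le
    rw [max_eq_right h, mul_assoc, two_mul]
    exact add_le_add (div_rpow_le_rpow_div_mul_rpow_neg hα hβα le_rfl hτ hτ1 h)
      (div_rpow_le_rpow_div_mul_rpow_neg hα le_rfl hβα hτ hτ1 h)

lemma paperG_le_two_mul_rpow (hβ : 0 ≤ β) (hβα : β < α) {τ : ℝ} (hτ : 0 < τ) (hτ1 : τ ≤ 1)
    (x z : E) : paperG d α β τ x z ≤ 2 * τ ^ (-(d:ℝ)/α) :=
  calc paperG d α β τ x z ≤ 2 * τ ^ (β/α) * paperF₀ d α β τ z x :=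
        paperG_le_mul_paperF₀ (hβ.trans_lt hβα) hβα.le hτ hτ1 x z
    _ ≤ 2 * τ ^ (β/α) * (τ ^ (1/α)) ^ (-((d:ℝ) + β)) := by
        gcongr
        exact paperF₀_le hβ hτ z x
    _ = 2 * τ ^ (-(d:ℝ)/α) := by rw [mul_assoc, rpow_div_mul_rpow_one_div_rpow_neg hτ]

variable (d α β) in
lemma measurable_paperG_mul_paperF₀ (t : ℝ) (x y : E) :
    Measurable fun p : ℝ × E => paperG d α β (t - p.1) x p.2 * paperF₀ d α β p.1 p.2 y :=
  (measurable_paperG.comp ((measurable_const.sub measurable_fst).prodMk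
    (measurable_const.prodMk measurable_snd))).mul
    (measurable_paperF₀.comp (measurable_fst.prodMk (measurable_snd.prodMk measurable_const)))

lemma integrable_paperG_mul_paperF₀ (hβ : 0 < β) (hβα : β < α) {t s : ℝ} (ht1 : t ≤ 1)
    (hs : s ∈ Ioo 0 t) (x y : E) :
    Integrable fun z : E => paperG d α β (t - s) x z * paperF₀ d α β s z y := by
  refine ((integrable_paperF₀ (α := α) hβ hs.1 y).const_mul (2 * (t - s) ^ (-(d:ℝ)/α))).mono'
    ((measurable_paperG_mul_paperF₀ d α β t x y).comp measurable_prodMk_left).aestronglyMeasurable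
    (ae_of_all _ fun z => ?_)
  rw [norm_of_nonneg (mul_nonneg (paperG_nonneg (by linarith [hs.2]) _ _) (paperF₀_nonneg _ _ _))]
  exact mul_le_mul_of_nonneg_right
    (paperG_le_two_mul_rpow hβ.le hβα (by linarith [hs.2]) (by linarith [hs.1]) x z)
    (paperF₀_nonneg _ _ _)

lemma integral_paperG_mul_paperF₀_le_sup_paperG_mul (hβ : 0 < β) (hβα : β < α) {t s : ℝ}
    (ht1 : t ≤ 1) (hs : s ∈ Ioo 0 t) (x y : E) :
    ∫ z : E, paperG d α β (t - s) x z * paperF₀ d α β s z y ≤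
      2 * (t - s) ^ (-(d:ℝ)/α) * s ^ (-(β/α)) * ∫ w : E, max 1 ‖w‖ ^ (-((d:ℝ) + β)) := by
  rw [mul_assoc, ← integral_paperF₀ hs.1 y, ← integral_const_mul]
  refine integral_mono_of_nonneg
    (ae_of_all _ fun z =>
      mul_nonneg (paperG_nonneg (by linarith [hs.2]) _ _) (paperF₀_nonneg _ _ _))
    ((integrable_paperF₀ hβ hs.1 y).const_mul _) (ae_of_all _ fun z => ?_)
  exact mul_le_mul_of_nonneg_right
    (paperG_le_two_mul_rpow hβ.le hβα (by linarith [hs.2]) (by linarith [hs.1]) x z)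
    (paperF₀_nonneg _ _ _)

lemma integral_paperG_mul_paperF₀_le_sup_paperF₀_mul (hβ : 0 < β) (hβα : β < α) {t s : ℝ}
    (ht1 : t ≤ 1) (hs : s ∈ Ioo 0 t) (x y : E) :
    ∫ z : E, paperG d α β (t - s) x z * paperF₀ d α β s z y ≤
      2 * (s ^ (1/α)) ^ (-((d:ℝ) + β)) * ∫ w : E, max 1 ‖w‖ ^ (-((d:ℝ) + β)) := by
  have hts : 0 < t - s := by linarith [hs.2]
  set c := (s ^ (1/α)) ^ (-((d:ℝ) + β))
  have hcancel : (t - s) ^ (β/α) * (t - s) ^ (-(β/α)) = 1 := by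
    rw [← rpow_add hts, add_neg_cancel, rpow_zero]
  calc ∫ z : E, paperG d α β (t - s) x z * paperF₀ d α β s z y
      ≤ ∫ z : E, 2 * c * (t - s) ^ (β/α) * paperF₀ d α β (t - s) z x := by
        refine integral_mono_of_nonneg (ae_of_all _ fun z => mul_nonneg
          (paperG_nonneg hts.le _ _) (paperF₀_nonneg _ _ _))
          ((integrable_paperF₀ hβ hts x).const_mul _) (ae_of_all _ fun z => ?_)
        calc paperG d α β (t - s) x z * paperF₀ d α β s z y
            ≤ (2 * (t - s) ^ (β/α) * paperF₀ d α β (t - s) z x) * c :=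
              mul_le_mul (paperG_le_mul_paperF₀ (hβ.trans hβα) hβα.le hts (by linarith [hs.1]) x z)
                (paperF₀_le hβ.le hs.1 z y) (paperF₀_nonneg _ _ _)
                (mul_nonneg (by positivity) (paperF₀_nonneg _ _ _))
          _ = 2 * c * (t - s) ^ (β/α) * paperF₀ d α β (t - s) z x := by ring
    _ = 2 * c * ∫ w : E, max 1 ‖w‖ ^ (-((d:ℝ) + β)) := by
        rw [integral_const_mul, integral_paperF₀ hts x, mul_assoc (2 * c), ← mul_assoc _ _ (∫ _, _),
          hcancel, one_mul]

lemma integrableOn_integral_paperG_mul_paperF₀ (hβ : 0 < β) (hβα : β < α) {t : ℝ} (ht : 0 < t)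
    (ht1 : t ≤ 1) (x y : E) :
    IntegrableOn (fun s => ∫ z : E, paperG d α β (t - s) x z * paperF₀ d α β s z y) (Ioc 0 t) := by
  have hα : 0 < α := hβ.trans hβα
  set J := ∫ w : E, max 1 ‖w‖ ^ (-((d:ℝ) + β))
  have hJ : 0 ≤ J := integral_nonneg fun w => rpow_nonneg (le_max_of_le_left zero_le_one) _
  set c₁ := 2 * (t/2) ^ (-(d:ℝ)/α) * J with hc₁_def
  set c₂ := 2 * ((t/2) ^ (1/α)) ^ (-((d:ℝ) + β)) * J with hc₂_def
  have hdom : IntegrableOn (fun s : ℝ => c₁ * s ^ (-(β/α)) + c₂) (Ioc 0 t) := by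
    have hexp : -1 < -(β/α) := neg_lt_neg ((div_lt_one hα).2 hβα)
    have hrpow := intervalIntegral.intervalIntegrable_rpow' (a := 0) (b := t) hexp
    rw [intervalIntegrable_iff, uIoc_of_le ht.le] at hrpow
    exact (hrpow.const_mul c₁).add (integrableOn_const measure_Ioc_lt_top.ne)
  have hmeas := (measurable_paperG_mul_paperF₀ d α β t x y).stronglyMeasurable.integral_prod_right'
    (ν := volume)
  refine hdom.mono' hmeas.aestronglyMeasurable ((ae_restrict_congr_set Ioo_ae_eq_Ioc).1
    (ae_restrict_of_forall_mem measurableSet_Ioo fun s hs => ?_))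
  have hts : 0 < t - s := by linarith [hs.2]
  have hs0 : 0 < s := hs.1
  rw [norm_of_nonneg (integral_nonneg fun z =>
    mul_nonneg (paperG_nonneg hts.le _ _) (paperF₀_nonneg _ _ _))]
  have hc₁ : 0 ≤ c₁ * s ^ (-(β/α)) := mul_nonneg (mul_nonneg (by positivity) hJ) (by positivity)
  have hc₂ : 0 ≤ c₂ := mul_nonneg (by positivity) hJ
  rcases le_total s (t/2) with hst | hst
  · refine (integral_paperG_mul_paperF₀_le_sup_paperG_mul hβ hβα ht1 hs x y).trans ?_
    have hmono : (t - s) ^ (-(d:ℝ)/α) ≤ (t/2) ^ (-(d:ℝ)/α) :=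
      rpow_le_rpow_of_nonpos (by positivity) (by linarith)
        (by rw [neg_div]; exact neg_nonpos.2 (by positivity))
    calc 2 * (t - s) ^ (-(d:ℝ)/α) * s ^ (-(β/α)) * J ≤ c₁ * s ^ (-(β/α)) := by
          rw [mul_right_comm, hc₁_def]; gcongr
      _ ≤ c₁ * s ^ (-(β/α)) + c₂ := le_add_of_nonneg_right hc₂
  · refine (integral_paperG_mul_paperF₀_le_sup_paperF₀_mul hβ hβα ht1 hs x y).trans ?_
    have hmono : (s ^ (1/α)) ^ (-((d:ℝ) + β)) ≤ ((t/2) ^ (1/α)) ^ (-((d:ℝ) + β)) :=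
      rpow_le_rpow_of_nonpos (by positivity) (rpow_le_rpow (by positivity) hst (by positivity))
        (by linarith [d.cast_nonneg (α := ℝ)])
    calc 2 * (s ^ (1/α)) ^ (-((d:ℝ) + β)) * J ≤ c₂ := by rw [hc₂_def]; gcongr
      _ ≤ c₁ * s ^ (-(β/α)) + c₂ := le_add_of_nonneg_left hc₁

end Kernels

theorem iterated_kernel_bound_general (d : ℕ) (α β : ℝ)
    (hβ : 0 < β) (hβα : β < α)
    (B C₇ Cg C' : ℝ) (hB : 0 ≤ B)
    (hC₇ : 0 < C₇) (hCg : 0 < Cg) (hC' : 0 < C')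
    (p₀ Sb : ℝ → EuclideanSpace ℝ (Fin d) → EuclideanSpace ℝ (Fin d) → ℝ)
    (hSb : ∀ s > (0:ℝ), ∀ z y : EuclideanSpace ℝ (Fin d),
      |Sb s z y| ≤ C₇ * B * paperF₀ d α β s z y)
    (hp₀ : ∀ t > (0:ℝ), ∀ x y : EuclideanSpace ℝ (Fin d),
      0 ≤ p₀ t x y ∧ p₀ t x y ≤ Cg * paperG d α β t x y)
    (hconv : ∀ t ∈ Set.Ioc (0:ℝ) 1, ∀ x y : EuclideanSpace ℝ (Fin d),
      (∫ s in Set.Ioc (0:ℝ) t, ∫ z : EuclideanSpace ℝ (Fin d),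
          paperG d α β (t - s) x z * paperF₀ d α β s z y) ≤ C' * paperG d α β t x y)
    (q : ℕ → ℝ → EuclideanSpace ℝ (Fin d) → EuclideanSpace ℝ (Fin d) → ℝ)
    (hq0 : ∀ t x y, q 0 t x y = p₀ t x y)
    (hqn : ∀ n t x y, q (n + 1) t x y =
      ∫ s in Set.Ioc (0:ℝ) t, ∫ z : EuclideanSpace ℝ (Fin d),
        q n (t - s) x z * Sb s z y) :
    ∃ C > (0:ℝ), ∃ K > (0:ℝ), ∀ n : ℕ, ∀ t ∈ Set.Ioc (0:ℝ) 1,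
      ∀ x y : EuclideanSpace ℝ (Fin d),
      |q n t x y| ≤ C * K ^ n * paperG d α β t x y := by
  set K := C₇ * B * C' + 1
  have hK : 0 < K := by positivity
  refine ⟨Cg, hCg, K, hK, fun n => ?_⟩
  induction n with
  | zero =>
    intro t ht x y
    rw [hq0, abs_of_nonneg (hp₀ t ht.1 x y).1, pow_zero, mul_one]
    exact (hp₀ t ht.1 x y).2
  | succ n ih =>
    rintro t ⟨ht, ht1⟩ x y
    have hg : 0 ≤ paperG d α β t x y := paperG_nonneg ht.le x y
    have hM : 0 ≤ Cg * K ^ n * (C₇ * B) := by positivity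
    have hstep : |q (n + 1) t x y| ≤
        Cg * K ^ n * (C₇ * B) * spaceTimeConv (paperG d α β) (paperF₀ d α β) t x y := by
      rw [hqn]
      refine abs_spaceTimeConv_le (fun s hs => integrable_paperG_mul_paperF₀ hβ hβα ht1 hs x y)
        (integrableOn_integral_paperG_mul_paperF₀ hβ hβα ht ht1 x y) fun s hs z => ?_
      have hts : t - s ∈ Ioc 0 1 := ⟨by linarith [hs.2], by linarith [hs.1]⟩
      rw [abs_mul, mul_mul_mul_comm]
      exact mul_le_mul (ih (t - s) hts x z) (hSb s hs.1 z y) (abs_nonneg _)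
        (mul_nonneg (by positivity) (paperG_nonneg hts.1.le x z))
    calc |q (n + 1) t x y|
        ≤ Cg * K ^ n * (C₇ * B) * (C' * paperG d α β t x y) :=
          hstep.trans (mul_le_mul_of_nonneg_left (hconv t ⟨ht, ht1⟩ x y) hM)
      _ = Cg * K ^ n * (K - 1) * paperG d α β t x y := by ring
      _ ≤ Cg * K ^ n * K * paperG d α β t x y := by gcongr; linarith
      _ = Cg * K ^ (n + 1) * paperG d α β t x y := by ring

/-- Lemma 3.1 of the paper: the iterated kernels `qₙ^b` built from `p₀` and the
nonlocal perturbation `S^b` satisfy `|qₙ^b(t,x,y)| ≤ C Kⁿ g(t,x,y)` on `(0,1]`. -/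
theorem iterated_kernel_bound (d : ℕ) (hd : 1 ≤ d) (α β : ℝ)
    (hβ : 0 < β) (hβα : β < α) (hα : α < 2)
    (Aβ B C₇ Cg C' : ℝ) (hAβ : 0 < Aβ) (hB : 0 ≤ B)
    (hC₇ : 0 < C₇) (hCg : 0 < Cg) (hC' : 0 < C')
    (b : EuclideanSpace ℝ (Fin d) → EuclideanSpace ℝ (Fin d) → ℝ)
    (hbm : Measurable (Function.uncurry b))
    (hbb : ∀ x z, |b x z| ≤ B) (hbsym : ∀ x z, b x z = b x (-z))
    (p₀ Sb : ℝ → EuclideanSpace ℝ (Fin d) → EuclideanSpace ℝ (Fin d) → ℝ)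
    (hSbdef : ∀ s > (0:ℝ), ∀ z y : EuclideanSpace ℝ (Fin d),
      Filter.Tendsto
        (fun ε : ℝ => Aβ * ∫ w in {w : EuclideanSpace ℝ (Fin d) | ε < ‖w‖},
            (p₀ s (z + w) y - p₀ s z y) * b z w / ‖w‖ ^ ((d : ℝ) + β))
        (nhdsWithin 0 (Set.Ioi 0)) (nhds (Sb s z y)))
    (hSb : ∀ s > (0:ℝ), ∀ z y : EuclideanSpace ℝ (Fin d),
      |Sb s z y| ≤ C₇ * B * paperF₀ d α β s z y)
    (hp₀ : ∀ t > (0:ℝ), ∀ x y : EuclideanSpace ℝ (Fin d),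
      0 ≤ p₀ t x y ∧ p₀ t x y ≤ Cg * paperG d α β t x y)
    (hconv : ∀ t ∈ Set.Ioc (0:ℝ) 1, ∀ x y : EuclideanSpace ℝ (Fin d),
      (∫ s in Set.Ioc (0:ℝ) t, ∫ z : EuclideanSpace ℝ (Fin d),
          paperG d α β (t - s) x z * paperF₀ d α β s z y) ≤ C' * paperG d α β t x y)
    (q : ℕ → ℝ → EuclideanSpace ℝ (Fin d) → EuclideanSpace ℝ (Fin d) → ℝ)
    (hq0 : ∀ t x y, q 0 t x y = p₀ t x y)
    (hqn : ∀ n t x y, q (n + 1) t x y =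
      ∫ s in Set.Ioc (0:ℝ) t, ∫ z : EuclideanSpace ℝ (Fin d),
        q n (t - s) x z * Sb s z y) :
    ∃ C > (0:ℝ), ∃ K > (0:ℝ), ∀ n : ℕ, ∀ t ∈ Set.Ioc (0:ℝ) 1,
      ∀ x y : EuclideanSpace ℝ (Fin d),
      |q n t x y| ≤ C * K ^ n * paperG d α β t x y :=
  iterated_kernel_bound_general d α β hβ hβα B C₇ Cg C' hB hC₇ hCg hC' p₀ Sb hSb hp₀ hconv q hq0 hqn
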